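/- arXiv:1211.4943 — 5 statements merged into one kernel-verified Lean document; each statement's English description precedes it below -/
import Mathlib

section
/- For every integer m ≥ 1 and every nonzero complex number z, the function K_m(z) = ∫_0^π e^{z cos w} sin(m w) dw satisfies the recurrence K_{m+1}(z) = -(2m/z) K_m(z) + K_{m-1}(z) + (2/z)(e^z + (-1)^{m-1} e^{-z}). -/
open MeasureTheory Complex

/-- `K m z = ∫_0^π e^{z cos w} sin(m w) dw`. -/
noncomputable def K (m : ℕ) (z : ℂ) : ℂ :=
  ∫ w in (0:ℝ)..Real.pi, Complex.exp (z * Real.cos w) * Real.sin (m * w)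

/-! Since `sin((m+1)w) - sin((m-1)w) = 2 sin w cos(mw)` and `-z sin w e^{z cos w}` is the derivative
of `e^{z cos w}`, the difference `K_{m+1} - K_{m-1}` is `-2/z` times the integral of `cos(mw)`
against that derivative. One integration by parts turns it into the boundary terms
`(-1)^m e^{-z} - e^z` plus `m K_m`. -/

lemma hasDerivAt_cexp_mul_cos (z : ℂ) (w : ℝ) :
    HasDerivAt (fun w : ℝ => exp (z * Real.cos w)) (-z * Real.sin w * exp (z * Real.cos w)) w := by
  have h := (((hasDerivAt_cos (w : ℂ)).const_mul z).cexp).comp_ofReal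
  simp only [← ofReal_cos, ← ofReal_sin] at h
  convert h using 1
  ring

lemma hasDerivAt_ofReal_cos_mul (c w : ℝ) :
    HasDerivAt (fun w : ℝ => (Real.cos (c * w) : ℂ)) (-c * Real.sin (c * w)) w := by
  have h : HasDerivAt (fun w => Real.cos (c * w)) (-c * Real.sin (c * w)) w :=
    ((Real.hasDerivAt_cos (c * w)).comp w ((hasDerivAt_id w).const_mul c)).congr_deriv (by ring)
  exact_mod_cast h.ofReal_comp

lemma mul_integral_cexp_cos_mul_sin_mul_cos (z : ℂ) (c : ℝ) :
    z * ∫ w in (0:ℝ)..Real.pi, exp (z * Real.cos w) * (Real.sin w * Real.cos (c * w))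
      = exp z - Real.cos (c * Real.pi) * exp (-z)
        - c * ∫ w in (0:ℝ)..Real.pi, exp (z * Real.cos w) * Real.sin (c * w) := by
  have h := intervalIntegral.integral_mul_deriv_eq_deriv_mul (a := 0) (b := Real.pi)
    (fun w _ => hasDerivAt_ofReal_cos_mul c w) (fun w _ => hasDerivAt_cexp_mul_cos z w)
    (by apply Continuous.intervalIntegrable; fun_prop)
    (by apply Continuous.intervalIntegrable; fun_prop)
  simp only [mul_zero, Real.cos_zero, Real.cos_pi, ofReal_one, ofReal_neg, one_mul, mul_neg,
    mul_one] at h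
  rw [← intervalIntegral.integral_const_mul, ← intervalIntegral.integral_const_mul]
  have hL : ∫ w in (0:ℝ)..Real.pi, z * (exp (z * Real.cos w) * (Real.sin w * Real.cos (c * w)))
      = -∫ w in (0:ℝ)..Real.pi, Real.cos (c * w) * (-z * Real.sin w * exp (z * Real.cos w)) := by
    rw [← intervalIntegral.integral_neg]; congr with w; ring
  have hR : ∫ w in (0:ℝ)..Real.pi, c * (exp (z * Real.cos w) * Real.sin (c * w))
      = -∫ w in (0:ℝ)..Real.pi, -c * Real.sin (c * w) * exp (z * Real.cos w) := by
    rw [← intervalIntegral.integral_neg]; congr with w; ring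
  rw [hL, hR, h]
  ring

lemma K_add_two_sub_K (n : ℕ) (z : ℂ) :
    K (n + 2) z - K n z
      = 2 * ∫ w in (0:ℝ)..Real.pi, exp (z * Real.cos w) * (Real.sin w * Real.cos ((n + 1) * w)) := by
  rw [K, K, ← intervalIntegral.integral_sub (by apply Continuous.intervalIntegrable; fun_prop)
    (by apply Continuous.intervalIntegrable; fun_prop), ← intervalIntegral.integral_const_mul]
  refine intervalIntegral.integral_congr fun w _ => ?_
  have hsin : Real.sin ((n + 2 : ℕ) * w) - Real.sin (n * w)
      = 2 * (Real.sin w * Real.cos ((n + 1) * w)) := by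
    rw [show ((n + 2 : ℕ) : ℝ) * w = (n + 1) * w + w by push_cast; ring,
      show (n : ℝ) * w = (n + 1) * w - w by ring, Real.sin_add, Real.sin_sub]
    ring
  rw [← mul_sub, ← ofReal_sub, hsin]
  push_cast
  ring

/-- Recurrence relation for `K m z`. -/
theorem K_recurrence (m : ℕ) (hm : 1 ≤ m) (z : ℂ) (hz : z ≠ 0) :
    K (m + 1) z = -(2 * m / z) * K m z + K (m - 1) z
      + (2 / z) * (Complex.exp z + (-1:ℂ)^(m-1) * Complex.exp (-z)) := by
  obtain ⟨n, rfl⟩ := Nat.exists_eq_add_of_le' hm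
  have hdiff := K_add_two_sub_K n z
  have hparts := mul_integral_cexp_cos_mul_sin_mul_cos z (n + 1)
  have hsign : Real.cos ((n + 1) * Real.pi) = (-1) ^ (n + 1) := by
    exact_mod_cast Real.cos_nat_mul_pi (n + 1)
  have hK : K (n + 1) z = ∫ w in (0:ℝ)..Real.pi, exp (z * Real.cos w) * Real.sin ((n + 1) * w) := by
    simp [K]
  rw [hsign, ← hK] at hparts
  rw [Nat.add_sub_cancel, show n + 1 + 1 = n + 2 from rfl]
  simp only [ofReal_add, ofReal_natCast, ofReal_one, ofReal_pow, ofReal_neg] at hparts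
  field_simp
  push_cast
  linear_combination z * hdiff + 2 * hparts
end

section
/- For every integer m ≥ 0 and every nonzero complex number λ, the finite Fourier transform of the Chebyshev polynomial satisfies ∫_{-1}^1 e^{-iλx} T_m(x) dx = (1/(iλ))[e^{iλ}(-1)^m - e^{-iλ} + m K_m(-iλ)], where K_m(z) = ∫_0^π e^{z cos w} sin(m w) dw. -/
/-!
The substitution `x = cos w` turns `∫_{-1}^1 e^{zx} T_m(x) dx` into
`∫_0^π sin w · e^{z cos w} cos(m w) dw`. Differentiating `e^{z cos w} cos(m w)` produces
`-z` times this integrand plus `-m e^{z cos w} sin(m w)`, whose integral is `m K_m(z)`; the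
fundamental theorem of calculus then gives `z · ∫ = e^z - e^{-z} (-1)^m - m K_m(z)`, and
`z = -iλ` is the claim.
-/

open MeasureTheory Complex Polynomial

theorem intervalIntegral.integral_sin_smul_comp_cos {E : Type*} [NormedAddCommGroup E]
    [NormedSpace ℝ E] {g : ℝ → E} (hg : Continuous g) :
    ∫ w in (0:ℝ)..Real.pi, Real.sin w • g (Real.cos w) = ∫ x in (-1:ℝ)..1, g x := by
  have h := intervalIntegral.integral_deriv_smul_comp (a := 0) (b := Real.pi)
    (fun w _ => Real.hasDerivAt_cos w) Real.continuous_sin.neg.continuousOn hg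
  rw [Real.cos_zero, Real.cos_pi, intervalIntegral.integral_symm (-1 : ℝ) 1] at h
  simpa only [Function.comp_apply, neg_smul, intervalIntegral.integral_neg, neg_inj] using h

theorem integral_mul_chebyshev_T_eq_integral_cos {f : ℝ → ℂ} (hf : Continuous f) (m : ℤ) :
    ∫ x in (-1:ℝ)..1, f x * (((Chebyshev.T ℝ m).eval x : ℝ) : ℂ) =
      ∫ w in (0:ℝ)..Real.pi, Real.sin w * (f (Real.cos w) * Real.cos (m * w)) := by
  rw [← intervalIntegral.integral_sin_smul_comp_cos (by fun_prop)]
  simp only [Chebyshev.T_real_cos, real_smul]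

theorem hasDerivAt_cexp_mul_cos_mul_cos (z : ℂ) (μ w : ℝ) :
    HasDerivAt (fun w : ℝ => Complex.exp (z * Real.cos w) * Real.cos (μ * w))
      (-(z * (Real.sin w * (Complex.exp (z * Real.cos w) * Real.cos (μ * w)))
        + μ * (Complex.exp (z * Real.cos w) * Real.sin (μ * w)))) w := by
  have hexp := (((Real.hasDerivAt_cos w).ofReal_comp).const_mul z).cexp
  have hcos := (((hasDerivAt_id w).const_mul μ).cos).ofReal_comp
  refine (hexp.mul hcos).congr_deriv ?_
  simp only [id, ofReal_neg, ofReal_mul, mul_one]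
  ring

theorem mul_integral_sin_mul_cexp_cos_mul_cos (z : ℂ) (m : ℕ) :
    z * ∫ w in (0:ℝ)..Real.pi, Real.sin w * (Complex.exp (z * Real.cos w) * Real.cos (m * w)) =
      Complex.exp z - Complex.exp (-z) * (-1) ^ m - m * K m z := by
  have hftc := intervalIntegral.integral_eq_sub_of_hasDerivAt (a := 0) (b := Real.pi)
    (fun w _ => hasDerivAt_cexp_mul_cos_mul_cos z m w)
    ((by fun_prop : Continuous _).intervalIntegrable _ _)
  rw [intervalIntegral.integral_neg, intervalIntegral.integral_add
    ((by fun_prop : Continuous _).intervalIntegrable _ _)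
    ((by fun_prop : Continuous _).intervalIntegrable _ _),
    intervalIntegral.integral_const_mul, intervalIntegral.integral_const_mul] at hftc
  simp only [Real.cos_pi, Real.cos_zero, mul_zero, Real.cos_nat_mul_pi] at hftc
  rw [K]
  simp only [ofReal_natCast, ofReal_neg, ofReal_one, ofReal_pow, mul_one, mul_neg_one] at hftc
  linear_combination -hftc

/-- The finite Fourier transform of the Chebyshev polynomial in terms of `K m`. -/
theorem chebyshev_fourier_via_K (m : ℕ) (l : ℂ) (hl : l ≠ 0) :
    (∫ x in (-1:ℝ)..1, Complex.exp (-Complex.I * l * x) *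
        (((Polynomial.Chebyshev.T ℝ m).eval x : ℝ) : ℂ)) =
      (1 / (Complex.I * l)) *
        (Complex.exp (Complex.I * l) * (-1:ℂ)^m - Complex.exp (-Complex.I * l)
          + m * K m (-Complex.I * l)) := by
  have hIl : Complex.I * l ≠ 0 := mul_ne_zero I_ne_zero hl
  have hsubst := integral_mul_chebyshev_T_eq_integral_cos
    (f := fun x : ℝ => cexp (-I * l * x)) (by fun_prop) m
  rw [Int.cast_natCast] at hsubst
  have hftc := mul_integral_sin_mul_cexp_cos_mul_cos (-I * l) m
  rw [← hsubst, show -(-I * l) = I * l by ring] at hftc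
  rw [one_div_mul_eq_div, eq_div_iff hIl]
  linear_combination -hftc
end

section
/- For every integer m ≥ 0 and every nonzero complex number λ, ∫_{-1}^1 e^{-iλx} T_m(x) dx = ∑_{n=1}^{m+1} α_n^m [e^{iλ}/(iλ)^n + (-1)^{n+m} e^{-iλ}/(iλ)^n], where α_1^m = (-1)^m, α_2^m = (-1)^{m+1} m^2, and for 3 ≤ n ≤ m+1, α_n^m = (-1)^{m+n-1} 2^{n-2} m ∑_{k=1}^{m-n+2} C(n+k-3, k-1) ∏_{j=k}^{n+k-3} (m-j). -/
/-!
Put `c = iλ`. Since `(c - d/dx) ∑_k P^{(k)} / c^{k+1} = P` for a polynomial `P`, the function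
`-e^{-cx} ∑_k P^{(k)}(x) / c^{k+1}` is an antiderivative of `e^{-cx} P(x)`, so the integral is a
finite sum over the values `T_m^{(k)}(±1)`, `k ≤ m`. Parity, `T_m(-x) = (-1)^m T_m(x)`, gives
`T_m^{(k)}(-1) = (-1)^{m+k} T_m^{(k)}(1)`, and the Chebyshev differential equation gives
`T_m^{(k)}(1) = ∏_{l<k} (m² - l²)/(2l + 1) = 2^{k-1} m (k-1)! C(m+k-1, 2k-1)`.
It remains to see `α_{k+1}^m = (-1)^{m+k} T_m^{(k)}(1)`: after writing each summand of `α` as a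
product of two binomial coefficients, this is the Chu–Vandermonde identity in the upper index,
`∑_{i+j=N} C(i,a) C(j,b) = C(N+1, a+b+1)`, which compares coefficients of
`X^a/(1-X)^{a+1} · X^b/(1-X)^{b+1} = X^{a+b}/(1-X)^{a+b+2}`.
-/

open MeasureTheory Finset Polynomial

/-- The coefficients `α_n^m` in the finite Fourier transform of the Chebyshev polynomials. -/
noncomputable def alphaCoeff (m n : ℕ) : ℂ :=
  if n = 1 then (-1:ℂ)^m
  else if n = 2 then (-1:ℂ)^(m+1) * (m:ℂ)^2
  else (-1:ℂ)^(m+n-1) * 2^(n-2) * (m:ℂ) *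
    ∑ k ∈ Finset.Icc 1 (m - n + 2), ((n + k - 3).choose (k - 1) : ℂ) *
      ∏ j ∈ Finset.Icc k (n + k - 3), ((m:ℂ) - (j:ℂ))

open scoped Nat

namespace PowerSeries

theorem coeff_X_pow_mul_invOneSubPow (a n : ℕ) :
    coeff n ((X : ℤ⟦X⟧) ^ a * (invOneSubPow ℤ (a + 1)).val) = n.choose a := by
  rw [coeff_X_pow_mul', invOneSubPow_val_succ_eq_mk_add_choose, coeff_mk]
  split_ifs with h
  · rw [Nat.add_sub_cancel' h]
  · rw [Nat.choose_eq_zero_of_lt (not_le.1 h), Nat.cast_zero]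

end PowerSeries

theorem Nat.sum_antidiagonal_choose_mul_choose (a b N : ℕ) :
    ∑ ij ∈ antidiagonal N, ij.1.choose a * ij.2.choose b = (N + 1).choose (a + b + 1) := by
  open PowerSeries in
  have hprod : (X : ℤ⟦X⟧) * (((X : ℤ⟦X⟧) ^ a * (invOneSubPow ℤ (a + 1)).val) *
      ((X : ℤ⟦X⟧) ^ b * (invOneSubPow ℤ (b + 1)).val))
        = (X : ℤ⟦X⟧) ^ (a + b + 1) * (invOneSubPow ℤ (a + b + 1 + 1)).val := by
    rw [show a + b + 1 + 1 = (a + 1) + (b + 1) by ring, invOneSubPow_add ℤ (a + 1) (b + 1),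
      Units.val_mul]
    ring
  have h := congrArg (PowerSeries.coeff (N + 1)) hprod
  rw [PowerSeries.coeff_succ_X_mul, PowerSeries.coeff_mul] at h
  simp only [PowerSeries.coeff_X_pow_mul_invOneSubPow] at h
  exact_mod_cast h

-- The freedom in `X` absorbs the truncated upper limit `m - n + 2` of `alphaCoeff` at `n = m + 1`.
theorem Nat.sum_Icc_add_choose_mul_sub_choose {m q X : ℕ} (hX : m ≤ q + X + 1) (hXm : X ≤ m) :
    ∑ j ∈ Icc 1 X, (q + j).choose (q + 1) * (m - j).choose (q + 1)
      = (m + q + 1).choose (2 * q + 3) := by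
  have hshift : ∑ j ∈ Icc 1 X, (q + j).choose (q + 1) * (m - j).choose (q + 1)
      = ∑ i ∈ Icc (q + 1) (q + X), i.choose (q + 1) * (m + q - i).choose (q + 1) := by
    rw [← map_add_left_Icc, sum_map]
    refine sum_congr rfl fun j _ => ?_
    rw [addLeftEmbedding_apply, show m + q - (q + j) = m - j by omega]
  rw [hshift, show 2 * q + 3 = (q + 1) + (q + 1) + 1 by ring,
    ← sum_antidiagonal_choose_mul_choose, Finset.Nat.sum_antidiagonal_eq_sum_range_succ_mk]
  refine sum_subset (fun i hi => by simp only [mem_Icc, mem_range] at hi ⊢; omega) ?_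
  intro i hi hni
  simp only [mem_Icc, mem_range, not_and_or, not_le] at hi hni
  rcases hni with hlow | hhigh
  · rw [Nat.choose_eq_zero_of_lt hlow, zero_mul]
  · rw [Nat.choose_eq_zero_of_lt (show m + q - i < q + 1 by omega), mul_zero]

theorem Nat.two_pow_mul_factorial_mul_prod_odd (r : ℕ) :
    2 ^ r * r ! * ∏ l ∈ range (r + 1), (2 * l + 1) = (2 * r + 1)! := by
  rw [Nat.factorial_eq_mul_doubleFactorial, Nat.doubleFactorial_eq_prod_odd,
    Nat.doubleFactorial_two_mul, prod_range_succ']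
  ring

theorem prod_range_succ_sq_sub_sq {R : Type*} [CommRing R] (x : R) (r : ℕ) :
    ∏ l ∈ range (r + 1), (x ^ 2 - (l : R) ^ 2)
      = x * ∏ j ∈ range (2 * r + 1), (x + r - j) := by
  induction r with
  | zero => simp [sq]
  | succ r ih =>
    have hshift : ∏ j ∈ range (2 * (r + 1) + 1), (x + ↑(r + 1) - j)
        = (x + r + 1) * (x - r - 1) * ∏ j ∈ range (2 * r + 1), (x + r - j) := by
      rw [show 2 * (r + 1) + 1 = 2 * r + 1 + 1 + 1 by ring, prod_range_succ', prod_range_succ]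
      push_cast
      ring_nf
    rw [prod_range_succ, ih, hshift]
    push_cast
    ring

theorem choose_mul_prod_Icc_sub {R : Type*} [CommRing R] {m q j : ℕ} (hj : 1 ≤ j)
    (hjm : j ≤ m) :
    ((q + j).choose (j - 1) : R) * ∏ i ∈ Icc j (q + j), ((m : R) - i)
      = ((q + 1)! * ((q + j).choose (q + 1) * (m - j).choose (q + 1)) : ℕ) := by
  have hprod : ∏ i ∈ Icc j (q + j), ((m : R) - i) = ((m - j).descFactorial (q + 1) : R) := by
    rw [← descPochhammer_eval_eq_descFactorial, descPochhammer_eval_eq_prod_range,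
      ← Ico_add_one_right_eq_Icc, prod_Ico_eq_prod_range, show q + j + 1 - j = q + 1 by omega]
    refine prod_congr rfl fun i _ => ?_
    push_cast [Nat.cast_sub hjm]
    ring
  rw [hprod, Nat.choose_symm_of_eq_add (show q + j = (j - 1) + (q + 1) by omega),
    Nat.descFactorial_eq_factorial_mul_choose]
  push_cast
  ring

namespace Polynomial

theorem iterate_derivative_comp_neg_X {R : Type*} [CommRing R] (p : R[X]) (k : ℕ) :
    (derivative^[k] p).comp (-X) = (-1) ^ k * derivative^[k] (p.comp (-X)) := by
  induction k with
  | zero => simp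
  | succ k ih =>
    have h := derivative_comp (derivative^[k] p) (-X)
    rw [ih, derivative_neg, derivative_X, neg_one_mul] at h
    rw [Function.iterate_succ_apply', Function.iterate_succ_apply',
      ← neg_neg ((derivative _).comp _), ← h, derivative_mul, derivative_pow, derivative_neg,
      derivative_one]
    ring

theorem C_mul_sub_derivative_sum_iterate_derivative {K : Type*} [Field K] (P : K[X]) {c : K}
    (hc : c ≠ 0) {N : ℕ} (hN : P.natDegree < N) :
    C c * (∑ k ∈ range N, C (c ^ (k + 1))⁻¹ * derivative^[k] P)
      - derivative (∑ k ∈ range N, C (c ^ (k + 1))⁻¹ * derivative^[k] P) = P := by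
  have hterm (k : ℕ) :
      C c * (C (c ^ (k + 1))⁻¹ * derivative^[k] P) = C (c ^ k)⁻¹ * derivative^[k] P := by
    rw [← mul_assoc, ← C_mul, pow_succ, mul_inv, mul_left_comm, mul_inv_cancel₀ hc, mul_one]
  simp only [mul_sum, hterm, derivative_sum, derivative_C_mul,
    ← Function.iterate_succ_apply' derivative]
  rw [← sum_sub_distrib, sum_range_sub' (fun k => C (c ^ k)⁻¹ * derivative^[k] P),
    iterate_derivative_eq_zero hN]
  simp

namespace Chebyshev

theorem T_comp_neg_X {R : Type*} [CommRing R] (n : ℤ) :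
    (T R n).comp (-X) = ((n.negOnePow : ℤ) : R[X]) * T R n := by
  have h : (T ℤ n).comp (-X) = ((n.negOnePow : ℤ) : ℤ[X]) * T ℤ n :=
    Polynomial.funext fun x => by simp
  simpa [map_comp, map_T] using congrArg (map (Int.castRingHom R)) h

theorem iterate_derivative_T_eval_neg {R : Type*} [CommRing R] (n : ℤ) (k : ℕ) (x : R) :
    (derivative^[k] (T R n)).eval (-x)
      = (-1) ^ k * n.negOnePow * (derivative^[k] (T R n)).eval x := by
  have h := congrArg (eval x) (iterate_derivative_comp_neg_X (T R n) k)
  rw [eval_comp, eval_neg, eval_X, T_comp_neg_X, iterate_derivative_intCast_mul] at h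
  simpa [mul_assoc] using h

theorem iterate_derivative_T_eval_one_succ {𝔽 : Type*} [Field 𝔽] [CharZero 𝔽] (m r : ℕ) :
    (derivative^[r + 1] (T 𝔽 m)).eval 1 = 2 ^ r * m * r ! * (m + r).choose (2 * r + 1) := by
  have hden : ((∏ l ∈ range (r + 1), (2 * l + 1) : ℕ) : 𝔽) ≠ 0 := by
    exact_mod_cast (prod_pos fun l _ => by omega).ne'
  have hnum : ∏ l ∈ range (r + 1), ((m : 𝔽) ^ 2 - (l : 𝔽) ^ 2)
      = m * ((m + r).descFactorial (2 * r + 1) : 𝔽) := by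
    rw [prod_range_succ_sq_sub_sq, ← descPochhammer_eval_eq_descFactorial,
      descPochhammer_eval_eq_prod_range]
    push_cast
    rfl
  rw [iterate_derivative_T_eval_one_eq_div, div_eq_iff hden]
  push_cast
  rw [hnum, Nat.descFactorial_eq_factorial_mul_choose, ← Nat.two_pow_mul_factorial_mul_prod_odd]
  push_cast
  ring

end Chebyshev

end Polynomial

theorem integral_exp_neg_mul_mul_eval (P : ℂ[X]) {c : ℂ} (hc : c ≠ 0) {N : ℕ}
    (hN : P.natDegree < N) (a b : ℝ) :
    ∫ x in a..b, Complex.exp (-c * x) * P.eval (x : ℂ) =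
      ∑ k ∈ range N, (Complex.exp (-c * a) * (derivative^[k] P).eval (a : ℂ)
        - Complex.exp (-c * b) * (derivative^[k] P).eval (b : ℂ)) / c ^ (k + 1) := by
  set Q := ∑ k ∈ range N, C (c ^ (k + 1))⁻¹ * derivative^[k] P with hQ
  have hQP : C c * Q - derivative Q = P := C_mul_sub_derivative_sum_iterate_derivative P hc hN
  have hderiv (x : ℝ) : HasDerivAt (fun y : ℝ => -(Complex.exp (-c * y) * Q.eval (y : ℂ)))
      (Complex.exp (-c * x) * P.eval (x : ℂ)) x := by
    have hexp : HasDerivAt (fun y : ℝ => Complex.exp (-c * y))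
        (Complex.exp (-c * x) * (-c * 1)) x :=
      ((hasDerivAt_id (x : ℂ)).const_mul (-c)).cexp.comp_ofReal
    refine (hexp.mul (Q.hasDerivAt (x : ℂ)).comp_ofReal).neg.congr_deriv ?_
    rw [← hQP, eval_sub, eval_mul, eval_C]
    ring
  have hcont : Continuous fun x : ℝ => Complex.exp (-c * x) * P.eval (x : ℂ) := by fun_prop
  rw [intervalIntegral.integral_eq_sub_of_hasDerivAt (fun x _ => hderiv x)
    (hcont.intervalIntegrable a b)]
  simp only [hQ, eval_finsetSum, eval_mul, eval_C, mul_sum, ← sum_neg_distrib,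
    ← sum_sub_distrib]
  refine sum_congr rfl fun k _ => ?_
  ring

theorem alphaCoeff_add_three {m q : ℕ} (h : q + 2 ≤ m) :
    alphaCoeff m (q + 3)
      = (-1) ^ (m + q) * (2 ^ (q + 1) * m * (q + 1)! * (m + q + 1).choose (2 * q + 3)) := by
  have hsum : ∑ j ∈ Icc 1 (m - (q + 3) + 2), ((q + 3 + j - 3).choose (j - 1) : ℂ) *
      ∏ i ∈ Icc j (q + 3 + j - 3), ((m : ℂ) - i)
        = ((q + 1)! * (m + q + 1).choose (2 * q + 3) : ℕ) := by
    rw [← Nat.sum_Icc_add_choose_mul_sub_choose (q := q) (X := m - (q + 3) + 2) (by omega)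
      (by omega), mul_sum, Nat.cast_sum]
    refine sum_congr rfl fun j hj => ?_
    rw [mem_Icc] at hj
    rw [show q + 3 + j - 3 = q + j by omega, choose_mul_prod_Icc_sub hj.1 (by omega)]
  rw [alphaCoeff, if_neg (by omega), if_neg (by omega), hsum, show q + 3 - 2 = q + 1 by omega,
    show m + (q + 3) - 1 = m + q + 2 by omega, pow_add _ (m + q) 2]
  push_cast
  ring

open Polynomial.Chebyshev in
theorem alphaCoeff_succ {m k : ℕ} (hk : k ≤ m) :
    alphaCoeff m (k + 1) = (-1) ^ (m + k) * (derivative^[k] (T ℂ m)).eval 1 := by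
  match k with
  | 0 => simp [alphaCoeff]
  | 1 => simp [alphaCoeff, derivative_T_eval_one]
  | q + 2 =>
    rw [alphaCoeff_add_three (by omega), iterate_derivative_T_eval_one_succ, pow_add _ m (q + 2)]
    ring_nf

open Polynomial.Chebyshev in
/-- Explicit formula for the finite Fourier transform of the Chebyshev polynomials. -/
theorem chebyshev_fourier (m : ℕ) (l : ℂ) (hl : l ≠ 0) :
    (∫ x in (-1:ℝ)..1, Complex.exp (-Complex.I * l * x) *
        (((Polynomial.Chebyshev.T ℝ m).eval x : ℝ) : ℂ)) =
      ∑ n ∈ Finset.Icc 1 (m + 1), alphaCoeff m n *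
        (Complex.exp (Complex.I * l) / (Complex.I * l)^n
          + (-1:ℂ)^(n+m) * Complex.exp (-Complex.I * l) / (Complex.I * l)^n) := by
  have hc : Complex.I * l ≠ 0 := mul_ne_zero Complex.I_ne_zero hl
  have hdeg : (T ℂ m).natDegree < m + 1 := by simp [natDegree_T]
  have hcast (x : ℝ) : (((T ℝ m).eval x : ℝ) : ℂ) = (T ℂ m).eval (x : ℂ) :=
    algebraMap_eval_T x m
  simp_rw [hcast, neg_mul Complex.I l]
  rw [integral_exp_neg_mul_mul_eval _ hc hdeg, ← Ico_add_one_right_eq_Icc, sum_Ico_eq_sum_range,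
    show m + 1 + 1 - 1 = m + 1 by omega]
  refine sum_congr rfl fun k hk => ?_
  rw [add_comm 1 k, alphaCoeff_succ (by simpa [Nat.lt_succ_iff] using hk)]
  push_cast
  rw [iterate_derivative_T_eval_neg, Int.cast_negOnePow_natCast]
  have hs : ((-1 : ℂ) ^ (m + k)) ^ 2 = 1 := by
    rw [← pow_mul, mul_comm, pow_mul, neg_one_sq, one_pow]
  rw [mul_neg_one, neg_neg, mul_one]
  linear_combination ((derivative^[k] (T ℂ m)).eval 1 * Complex.exp (-(Complex.I * l))
    / (Complex.I * l) ^ (k + 1)) * hs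
end

section
/- For all integers j, m with 1 ≤ j and 2j ≤ m, the binomial identity (2(m-j)+1) C(m-j, m-2j) - (2j+1) C(m-j-1, m-2j) - (2m+1) C(m-j-1, m-2j-1) = 0 holds. -/
/-- The binomial coefficient `C(a,b)` for integers, with `C(a,b) = 0` when `b < 0` or `b > a`. -/
def C (a b : ℤ) : ℤ := if 0 ≤ b ∧ b ≤ a then (a.toNat.choose b.toNat : ℤ) else 0

lemma C_natCast (n k : ℕ) : C n k = n.choose k := by
  unfold C
  by_cases hk : k ≤ n
  · rw [if_pos (by omega), Int.toNat_natCast, Int.toNat_natCast]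
  · rw [if_neg (by omega), Nat.choose_eq_zero_of_lt (by omega), Nat.cast_zero]

lemma C_zero_right {a : ℤ} (ha : 0 ≤ a) : C a 0 = 1 := by
  simp [C, ha]

lemma C_of_neg_right (a : ℤ) {b : ℤ} (hb : b < 0) : C a b = 0 :=
  if_neg (by omega)

theorem Nat.choose_weighted_identity (b j : ℕ) :
    (2 * (b + j) + 3) * (b + j + 1).choose (b + 1)
      = (2 * j + 1) * (b + j).choose (b + 1) + (2 * (b + 2 * j) + 3) * (b + j).choose b := by
  have absorption : (b + j).choose (b + 1) * (b + 1) = (b + j).choose b * j := by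
    rw [Nat.choose_succ_right_eq, Nat.add_sub_cancel_left]
  rw [Nat.choose_succ_succ]
  linear_combination 2 * absorption

theorem binom_identity_two (j m : ℤ) (hj : 1 ≤ j) (hjm : 2 * j ≤ m) :
    (2 * (m - j) + 1) * C (m - j) (m - 2 * j)
      - (2 * j + 1) * C (m - j - 1) (m - 2 * j)
      - (2 * m + 1) * C (m - j - 1) (m - 2 * j - 1) = 0 := by
  rcases hjm.eq_or_lt with hm | hm
  · rw [show m - 2 * j = 0 by omega, show (0 : ℤ) - 1 = -1 by norm_num,
      C_zero_right (by omega), C_zero_right (by omega), C_of_neg_right _ (by norm_num)]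
    linear_combination (-2 : ℤ) * hm
  · obtain ⟨b, hb⟩ : ∃ b : ℕ, (b : ℤ) = m - 2 * j - 1 := ⟨_, Int.toNat_of_nonneg (by omega)⟩
    lift j to ℕ using (by omega)
    rw [show m - j - 1 = ((b + j : ℕ) : ℤ) by push_cast; omega, ← hb,
      show m - j = ((b + j + 1 : ℕ) : ℤ) by push_cast; omega,
      show m - 2 * j = ((b + 1 : ℕ) : ℤ) by push_cast; omega,
      C_natCast, C_natCast, C_natCast]
    have key := congrArg (Nat.cast : ℕ → ℤ) (Nat.choose_weighted_identity b j)
    push_cast at key ⊢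
    linear_combination key + 2 * ((b + j).choose b : ℤ) * hb
end

section
/- For all integers m ≥ 3 and 2 ≤ n ≤ m-2, ∑_{k=1}^{m-n+1} [ m C(n+k-2, k-1) ∏_{j=k}^{n+k-2}(m-j) - C(n+k-1, k-1) ∏_{j=k}^{n+k-1}(m+1-j) ] + ∑_{k=1}^{m-n-1} C(n+k-1, k-1) ∏_{j=k}^{n+k-1}(m-1-j) = 0. -/
/-!
Put `Σ(r, M) = ∑_{k=1}^{M-r} C(r+k-1, k-1) ∏_{j=k}^{r+k-1} (M-j)` (`chooseMulFallingSum r M`).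
Each product is the falling factorial `(M-k)_r = r! C(M-k, r)`, so
`Σ(r, M) = r! ∑_k C(r+k-1, r) C(M-k, r)`, and the upper-index Vandermonde convolution (the
coefficients of `(1-X)^{-(r+1)} (1-X)^{-(r+1)}`) gives `Σ(r, M) = r! C(M+r, 2r+1)`.
The three sums of the theorem are `m Σ(n-1, m)`, `Σ(n, m+1)` and `Σ(n, m-1)`, so the claim
reduces to `m (n-1)! C(m+n-1, 2n-1) + n! C(m+n-1, 2n+1) = n! C(m+n+1, 2n+1)`, which is
Pascal's rule applied twice together with `2n C(N, 2n) = (N-2n+1) C(N, 2n-1)`.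
-/

open Finset Nat

open PowerSeries in
theorem Nat.sum_antidiagonal_add_choose_mul_add_choose (a b s : ℕ) :
    ∑ ij ∈ antidiagonal s, (a + ij.1).choose a * (b + ij.2).choose b =
      (a + b + 1 + s).choose (a + b + 1) := by
  have h := congrArg (coeff s) (pow_add (mk 1 : ℤ⟦X⟧) (a + 1) (b + 1))
  rw [show a + 1 + (b + 1) = a + b + 1 + 1 by ring, mk_one_pow_eq_mk_choose_add,
    mk_one_pow_eq_mk_choose_add, mk_one_pow_eq_mk_choose_add, coeff_mul] at h
  simp only [coeff_mk] at h
  exact_mod_cast h.symm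

theorem Finset.Nat.sum_Icc_one_eq_sum_antidiagonal {M : Type*} [AddCommMonoid M]
    (f : ℕ → ℕ → M) (s : ℕ) :
    ∑ k ∈ Icc 1 (s + 1), f (k - 1) (s + 1 - k) = ∑ ij ∈ antidiagonal s, f ij.1 ij.2 := by
  refine sum_nbij' (fun k => (k - 1, s + 1 - k)) (fun ij => ij.1 + 1) ?_ ?_ ?_ ?_ ?_ <;>
    intro x hx <;> simp only [mem_Icc, HasAntidiagonal.mem_antidiagonal, Prod.ext_iff] at hx ⊢ <;>
    omega

theorem Nat.choose_add_two_add_two (n k : ℕ) :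
    (n + 2).choose (k + 2) = n.choose k + 2 * n.choose (k + 1) + n.choose (k + 2) := by
  rw [choose_succ_succ, choose_succ_succ, choose_succ_succ n (k + 1)]
  ring

theorem prod_Ico_natCast_sub_eq_descFactorial {M k r : ℕ} (h : k + r ≤ M) :
    ∏ j ∈ Ico k (k + r), ((M : ℤ) - j) = (M - k).descFactorial r := by
  rw [prod_Ico_eq_prod_range, Nat.add_sub_cancel_left, descFactorial_eq_prod_range, Nat.cast_prod]
  refine prod_congr rfl fun i hi => ?_
  rw [mem_range] at hi
  push_cast [Nat.sub_sub, Nat.cast_sub (show k + i ≤ M by omega)]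
  rfl

def chooseMulFallingSum (r M : ℕ) : ℤ :=
  ∑ k ∈ Icc 1 (M - r),
    ((r + k - 1).choose (k - 1) : ℤ) * ∏ j ∈ Icc k (r + k - 1), ((M : ℤ) - j)

theorem chooseMulFallingSum_eq (r M : ℕ) :
    chooseMulFallingSum r M = r ! * (M + r).choose (2 * r + 1) := by
  rcases Nat.lt_or_ge M (r + 1) with hM | hM
  · simp [chooseMulFallingSum, Nat.sub_eq_zero_of_le (show M ≤ r by omega),
      choose_eq_zero_of_lt (show M + r < 2 * r + 1 by omega)]
  obtain ⟨s, rfl⟩ := Nat.exists_eq_add_of_le hM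
  have term : ∀ k ∈ Icc 1 (s + 1), ((r + k - 1).choose (k - 1) : ℤ) *
      ∏ j ∈ Icc k (r + k - 1), (((r + 1 + s : ℕ) : ℤ) - j) =
        ((r ! * ((r + (k - 1)).choose r * (r + (s + 1 - k)).choose r) : ℕ) : ℤ) := by
    intro k hk
    rw [mem_Icc] at hk
    rw [show Icc k (r + k - 1) = Ico k (k + r) by ext; simp only [mem_Icc, mem_Ico]; omega,
      prod_Ico_natCast_sub_eq_descFactorial (by omega), descFactorial_eq_factorial_mul_choose,
      show r + k - 1 = r + (k - 1) by omega, choose_symm_add,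
      show r + 1 + s - k = r + (s + 1 - k) by omega]
    push_cast
    ring
  rw [chooseMulFallingSum, show r + 1 + s - r = s + 1 by omega, sum_congr rfl term,
    ← Nat.cast_sum,
    Finset.Nat.sum_Icc_one_eq_sum_antidiagonal
      (fun i j => r ! * ((r + i).choose r * (r + j).choose r)),
    ← mul_sum, Nat.sum_antidiagonal_add_choose_mul_add_choose]
  push_cast
  ring_nf

theorem mul_factorial_mul_choose_add_factorial_mul_choose (r M : ℕ) :
    M * (r ! * (M + r).choose (2 * r + 1)) + (r + 1)! * (M + r).choose (2 * r + 3) =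
      (r + 1)! * (M + r + 2).choose (2 * r + 3) := by
  rcases Nat.lt_or_ge M (r + 1) with hM | hM
  · simp [choose_eq_zero_of_lt (show M + r < 2 * r + 1 by omega),
      choose_eq_zero_of_lt (show M + r < 2 * r + 3 by omega),
      choose_eq_zero_of_lt (show M + r + 2 < 2 * r + 3 by omega)]
  obtain ⟨t, rfl⟩ := Nat.exists_eq_add_of_le hM
  have ratio := choose_succ_right_eq (r + 1 + t + r) (2 * r + 1)
  rw [show r + 1 + t + r - (2 * r + 1) = t by omega] at ratio
  rw [Nat.choose_add_two_add_two, factorial_succ]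
  zify at ratio ⊢
  linear_combination -(r ! : ℤ) * ratio

theorem coeff_difference_vanishes_general (m n : ℕ) (hn : 2 ≤ n) (hnm : n ≤ m - 2) :
    (∑ k ∈ Finset.Icc 1 (m - n + 1),
        ((m:ℤ) * ((n + k - 2).choose (k - 1) : ℤ) * ∏ j ∈ Finset.Icc k (n + k - 2), ((m:ℤ) - (j:ℤ))
          - ((n + k - 1).choose (k - 1) : ℤ) * ∏ j ∈ Finset.Icc k (n + k - 1), ((m:ℤ) + 1 - (j:ℤ))))
      + ∑ k ∈ Finset.Icc 1 (m - n - 1),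
          ((n + k - 1).choose (k - 1) : ℤ) * ∏ j ∈ Finset.Icc k (n + k - 1), ((m:ℤ) - 1 - (j:ℤ))
      = 0 := by
  obtain ⟨r, rfl⟩ : ∃ r, n = r + 1 := ⟨n - 1, by omega⟩
  obtain ⟨M, rfl⟩ : ∃ M, m = M + 1 := ⟨m - 1, by omega⟩
  calc
    _ = ((M + 1 : ℕ) : ℤ) * chooseMulFallingSum r (M + 1) -
          chooseMulFallingSum (r + 1) (M + 2) + chooseMulFallingSum (r + 1) M := by
      simp only [chooseMulFallingSum, sum_sub_distrib, mul_sum]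
      rw [show M + 1 - (r + 1) + 1 = M - r + 1 by omega, show M + 1 - r = M - r + 1 by omega,
        show M + 2 - (r + 1) = M - r + 1 by omega, show M + 1 - (r + 1) - 1 = M - (r + 1) by omega]
      refine congrArg₂ (· + ·) (congrArg₂ (· - ·) ?_ ?_) ?_ <;>
        refine sum_congr rfl fun k _ => ?_
      · rw [show r + 1 + k - 2 = r + k - 1 by omega]
        ring
      all_goals push_cast; ring_nf
    _ = 0 := by
      have key := congrArg (Nat.cast : ℕ → ℤ)
        (mul_factorial_mul_choose_add_factorial_mul_choose r (M + 1))
      rw [chooseMulFallingSum_eq, chooseMulFallingSum_eq, chooseMulFallingSum_eq]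
      push_cast at key ⊢
      ring_nf at key ⊢
      linear_combination key

theorem coeff_difference_vanishes (m n : ℕ) (hm : 3 ≤ m) (hn : 2 ≤ n) (hnm : n ≤ m - 2) :
    (∑ k ∈ Finset.Icc 1 (m - n + 1),
        ((m:ℤ) * ((n + k - 2).choose (k - 1) : ℤ) * ∏ j ∈ Finset.Icc k (n + k - 2), ((m:ℤ) - (j:ℤ))
          - ((n + k - 1).choose (k - 1) : ℤ) * ∏ j ∈ Finset.Icc k (n + k - 1), ((m:ℤ) + 1 - (j:ℤ))))
      + ∑ k ∈ Finset.Icc 1 (m - n - 1),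
          ((n + k - 1).choose (k - 1) : ℤ) * ∏ j ∈ Finset.Icc k (n + k - 1), ((m:ℤ) - 1 - (j:ℤ))
      = 0 :=
  coeff_difference_vanishes_general m n hn hnm
end
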